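/- arXiv:1505.07313 — 2 statements merged into one kernel-verified Lean document; each statement's English description precedes it below -/
import Mathlib

section
/- Under the setup of the bivariate Laplace transform identity: let ρ₁,…,ρ_m be distinct positive reals, Aᵢ coefficients, ψ⁺(β) = ψ⁺(∞) + Σᵢ Aᵢρᵢ/(ρᵢ+β), φ_∞ = lim_{β→∞} βψ⁺(β), and assume Σᵢ Aᵢρᵢ = φ_∞ and ψ⁺(∞)φ_∞ = 0. Then for all β₁, β₂ ≥ 0 with β₁ ≠ β₂: −Σ_{i=1}^m Aᵢ ρᵢ (1/((ρᵢ+β₁)ψ⁺(β₁)) − 1/φ_∞)(1/((ρᵢ+β₂)ψ⁺(β₂)) − 1/φ_∞) = (1/(β₂−β₁))(1/ψ⁺(β₁) − 1/ψ⁺(β₂)) + 1/φ_∞. -/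
open Finset

/-- algebraic bivariate identity. With `ψ⁺(β) = ψ⁺(∞) + Σᵢ Aᵢρᵢ/(ρᵢ+β)`,
`Σᵢ Aᵢρᵢ = φ∞`, `ψ⁺(∞)·φ∞ = 0` (encoded via `φinv = 1/φ∞`, with `φinv = 0` when
`φ∞ = ∞`), for all `β₁ ≠ β₂ ≥ 0`:
`−Σᵢ Aᵢρᵢ (1/((ρᵢ+β₁)ψ⁺(β₁)) − 1/φ∞)(1/((ρᵢ+β₂)ψ⁺(β₂)) − 1/φ∞)
  = (1/(β₂−β₁))(1/ψ⁺(β₁) − 1/ψ⁺(β₂)) + 1/φ∞`. -/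
theorem stmt_9 (m : ℕ) (ρ : Fin m → ℝ) (A : Fin m → ℝ) (ψinf φinv : ℝ)
    (hρ : ∀ i, 0 < ρ i) (hdist : Function.Injective ρ)
    (h1 : ψinf = 0 ∨ φinv = 0)
    (h2 : φinv ≠ 0 → (∑ i, A i * ρ i) * φinv = 1)
    (ψp : ℝ → ℝ) (hψp : ∀ β : ℝ, ψp β = ψinf + ∑ i, A i * (ρ i / (ρ i + β))) :
    ∀ β₁ β₂ : ℝ, 0 ≤ β₁ → 0 ≤ β₂ → β₁ ≠ β₂ → ψp β₁ ≠ 0 → ψp β₂ ≠ 0 →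
      -(∑ i, A i * ρ i * (1 / ((ρ i + β₁) * ψp β₁) - φinv) *
          (1 / ((ρ i + β₂) * ψp β₂) - φinv))
        = (1 / (β₂ - β₁)) * (1 / ψp β₁ - 1 / ψp β₂) + φinv := by
  intro β₁ β₂ hb1 hb2 hne hψ1 hψ2
  have hd1 : ∀ i, ρ i + β₁ ≠ 0 := fun i => by have := hρ i; positivity
  have hd2 : ∀ i, ρ i + β₂ ≠ 0 := fun i => by have := hρ i; positivity
  have hβ : β₂ - β₁ ≠ 0 := sub_ne_zero.mpr (Ne.symm hne)
  have key : ∀ i : Fin m, A i * ρ i * (1 / ((ρ i + β₁) * ψp β₁) - φinv) *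
          (1 / ((ρ i + β₂) * ψp β₂) - φinv)
      = (1 / ((β₂ - β₁) * ψp β₁ * ψp β₂)) * (A i * (ρ i / (ρ i + β₁)))
        - (1 / ((β₂ - β₁) * ψp β₁ * ψp β₂)) * (A i * (ρ i / (ρ i + β₂)))
        - (φinv / ψp β₁) * (A i * (ρ i / (ρ i + β₁)))
        - (φinv / ψp β₂) * (A i * (ρ i / (ρ i + β₂)))
        + (φinv * φinv) * (A i * ρ i) := by
    intro i
    have h1i := hd1 i
    have h2i := hd2 i
    field_simp
    ring
  rw [Finset.sum_congr rfl (fun i _ => key i)]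
  simp only [Finset.sum_add_distrib, Finset.sum_sub_distrib, ← Finset.mul_sum]
  have hS1 : ∑ i, A i * (ρ i / (ρ i + β₁)) = ψp β₁ - ψinf := by rw [hψp]; ring
  have hS2 : ∑ i, A i * (ρ i / (ρ i + β₂)) = ψp β₂ - ψinf := by rw [hψp]; ring
  rw [hS1, hS2]
  rcases eq_or_ne φinv 0 with hφ | hφ
  · subst hφ
    field_simp
    ring
  · rcases h1 with hψ0 | hφ0
    · have hT := h2 hφ
      subst hψ0
      field_simp
      linear_combination (-φinv * (β₂ - β₁) * (ψp β₁) * (ψp β₂)) * hT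
    · exact absurd hφ0 hφ
end

section
/- With g(x,b) = e^{−Φ(α)(b−x)}(e^b − K) for x < b as above (spectrally negative case, Φ(α) > 1, K > 0) and x₁* = log(KΦ(α)/(Φ(α)−1)), the value function v(x) := g(x, x₁*) for x < x₁* and v(x) := e^x − K for x ≥ x₁* is continuous on ℝ, continuously differentiable at x₁* (smooth fit: v'(x₁*−) = v'(x₁*+) = e^{x₁*}), and satisfies v(x) ≥ (e^x − K)⁺ for all x ∈ ℝ. -/
open Set

/-- with `Φ > 1`, `K > 0`, `x₁* = log(KΦ/(Φ−1))`, the value function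
`v(x) = e^{−Φ(x₁*−x)}(e^{x₁*} − K)` for `x < x₁*` and `v(x) = e^x − K` for
`x ≥ x₁*` is continuous, satisfies smooth fit at `x₁*` (derivative `e^{x₁*}`), and
dominates the payoff: `v(x) ≥ (e^x − K)⁺` for all `x`. -/
theorem stmt_15 (Φ K : ℝ) (hΦ : 1 < Φ) (hK : 0 < K)
    (x₁ : ℝ) (hx₁ : x₁ = Real.log (K * Φ / (Φ - 1)))
    (v : ℝ → ℝ)
    (hv : ∀ x : ℝ, v x =
      if x < x₁ then Real.exp (-Φ * (x₁ - x)) * (Real.exp x₁ - K)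
      else Real.exp x - K) :
    Continuous v ∧ HasDerivAt v (Real.exp x₁) x₁ ∧
    ∀ x : ℝ, max (Real.exp x - K) 0 ≤ v x := by
  have hΦ1 : (0:ℝ) < Φ - 1 := by linarith
  have hΦ0 : (0:ℝ) < Φ := by linarith
  have hpos : 0 < K * Φ / (Φ - 1) := by positivity
  have hE : Real.exp x₁ = K * Φ / (Φ - 1) := by rw [hx₁, Real.exp_log hpos]
  have hKE : K < Real.exp x₁ := by
    rw [hE, lt_div_iff₀ hΦ1]; nlinarith
  have hCpos : 0 < Real.exp x₁ - K := by linarith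
  have hΦC : Φ * (Real.exp x₁ - K) = Real.exp x₁ := by
    rw [hE]; field_simp; ring
  -- the two pieces
  set f₁ : ℝ → ℝ := fun x => Real.exp (-Φ * (x₁ - x)) * (Real.exp x₁ - K) with hf₁def
  set f₂ : ℝ → ℝ := fun x => Real.exp x - K with hf₂def
  have hmatch : f₁ x₁ = f₂ x₁ := by simp [hf₁def, hf₂def]
  -- v as piecewise with ≤
  have hveq : v = fun x => if x ≤ x₁ then f₁ x else f₂ x := by
    funext x
    rw [hv x]
    rcases lt_trichotomy x x₁ with h | h | h
    · rw [if_pos h, if_pos h.le]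
    · subst h; rw [if_neg (lt_irrefl x), if_pos le_rfl, hmatch]
    · rw [if_neg (not_lt_of_gt h), if_neg (not_le_of_gt h)]
  have hcf₁ : Continuous f₁ := by
    apply Continuous.mul _ continuous_const
    exact Real.continuous_exp.comp (by continuity)
  have hcf₂ : Continuous f₂ := Real.continuous_exp.sub continuous_const
  have hcont : Continuous v := by
    rw [hveq]
    exact hcf₁.if_le hcf₂ continuous_id continuous_const fun x hx => by rw [hx, hmatch]
  refine ⟨hcont, ?_, ?_⟩
  · -- smooth fit
    have hd₁ : ∀ x, HasDerivAt f₁ (Φ * Real.exp (-Φ * (x₁ - x)) * (Real.exp x₁ - K)) x := by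
      intro x
      have h0 : HasDerivAt (fun x : ℝ => -Φ * (x₁ - x)) Φ x := by
        have := ((hasDerivAt_id x).const_sub x₁).const_mul (-Φ)
        simpa using this
      have := (h0.exp).mul_const (Real.exp x₁ - K)
      exact this.congr_deriv (by ring)
    have hd₂ : ∀ x, HasDerivAt f₂ (Real.exp x) x := fun x =>
      (Real.hasDerivAt_exp x).sub_const K
    have h1 : HasDerivWithinAt v (Real.exp x₁) (Iic x₁) x₁ := by
      have : HasDerivWithinAt f₁ (Real.exp x₁) (Iic x₁) x₁ := by
        have := (hd₁ x₁).hasDerivWithinAt (s := Iic x₁)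
        simpa [hΦC] using this
      apply this.congr _ (by rw [hveq]; simp)
      intro y hy
      rw [hveq]
      show (if y ≤ x₁ then f₁ y else f₂ y) = f₁ y
      rw [if_pos (mem_Iic.mp hy)]
    have h2 : HasDerivWithinAt v (Real.exp x₁) (Ici x₁) x₁ := by
      have : HasDerivWithinAt f₂ (Real.exp x₁) (Ici x₁) x₁ :=
        (hd₂ x₁).hasDerivWithinAt
      apply this.congr _ (by rw [hveq]; simp [hmatch])
      intro y hy
      rcases eq_or_lt_of_le (mem_Ici.mp hy) with h | h
      · rw [hveq]; simp [← h, hmatch]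
      · rw [hveq]; simp [not_le_of_gt h]
    have := h1.union h2
    rw [Iic_union_Ici] at this
    exact hasDerivWithinAt_univ.mp this
  · -- domination
    intro x
    rw [hv x]
    by_cases h : x < x₁
    · rw [if_pos h]
      apply max_le
      · -- Bernoulli
        have hu : Real.exp (x - x₁) ≤ 1 := by
          rw [Real.exp_le_one_iff]; linarith
        set u : ℝ := Real.exp (x - x₁) with hu'
        have hupos : 0 < u := Real.exp_pos _
        have hber : 1 + Φ * (u - 1) ≤ (1 + (u - 1)) ^ Φ :=
          one_add_mul_self_le_rpow_one_add (by linarith) hΦ.le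
        have hrw : Real.exp (-Φ * (x₁ - x)) = u ^ Φ := by
          rw [hu', ← Real.exp_mul]
          congr 1; ring
        rw [hrw]
        have hEu : Real.exp x₁ * u = Real.exp x := by
          rw [hu', ← Real.exp_add]; congr 1; ring
        have h1 : (1 + Φ * (u - 1)) * (Real.exp x₁ - K) ≤ u ^ Φ * (Real.exp x₁ - K) := by
          apply mul_le_mul_of_nonneg_right _ hCpos.le
          simpa using hber
        nlinarith [h1]
      · positivity
    · rw [if_neg h]
      push_neg at h
      apply max_le le_rfl
      have : Real.exp x₁ ≤ Real.exp x := Real.exp_le_exp.mpr h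
      linarith
end
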